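/- Let S ⊂ M be path-connected with a countable subset S₀ ⊂ S dense for the induced intrinsic metric d_S, and let 0 < ε < 1/2. If a 1-Lipschitz map f : M → ℝⁿ belongs to F_ε(x₀,y₀,S) for all x₀ ≠ y₀ ∈ S₀, then f ∈ F_{2ε}(x,y,S) for all x ≠ y ∈ S. -/

import Mathlib

open scoped ENNReal

/-- A rectifiable curve in `S` from `x` to `y`, parametrized on `[0,1]`. -/
def IsCurve {M : Type*} [MetricSpace M] (S : Set M) (x y : M) (γ : ℝ → M) : Prop :=
  ContinuousOn γ (Set.Icc 0 1) ∧ Set.MapsTo γ (Set.Icc 0 1) S ∧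
    γ 0 = x ∧ γ 1 = y ∧ eVariationOn γ (Set.Icc 0 1) ≠ ⊤

/-- The intrinsic distance in `S` : the infimum of lengths of rectifiable curves
in `S` joining `x` to `y`. -/
noncomputable def dS {M : Type*} [MetricSpace M] (S : Set M) (x y : M) : ℝ≥0∞ :=
  ⨅ (γ : ℝ → M) (_ : IsCurve S x y γ), eVariationOn γ (Set.Icc 0 1)

/-- The condition defining `F_ε(x,y,S)` for a map `f : M → ℝⁿ`:
`ℓ(f∘γ) + ε ℓ(γ) > (1-ε) d_S(x,y)` for every rectifiable curve `γ` in `S`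
from `x` to `y`. -/
def MemF {M : Type*} [MetricSpace M] (n : ℕ) (ε : ℝ) (S : Set M) (x y : M)
    (f : M → EuclideanSpace ℝ (Fin n)) : Prop :=
  ∀ γ : ℝ → M, IsCurve S x y γ →
    ENNReal.ofReal (1 - ε) * dS S x y <
      eVariationOn (f ∘ γ) (Set.Icc 0 1) + ENNReal.ofReal ε * eVariationOn γ (Set.Icc 0 1)

/-! Approximate `x` and `y` by points `x₀, y₀ ∈ S₀` joined to them by curves `α, β` of length
`< δ`; once `2δ < d_S(x,y)` the points `x₀, y₀` are distinct. Applying the hypothesis to the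
curve `α⁻¹ · γ · β` from `x₀` to `y₀`, together with the triangle inequality for `d_S` and
`ℓ(f ∘ α) ≤ ℓ(α)`, gives `(1-ε) d_S(x,y) ≤ ℓ(f ∘ γ) + ε ℓ(γ) + 6δ`. Letting `δ → 0` and
using `0 < d_S(x,y) < ∞`, the factor `1 - ε` leaves room for the strict inequality with `2ε`. -/

open Set
open scoped NNReal

section Curves

variable {E : Type*}

def curveReverse (u : ℝ → E) : ℝ → E := fun t => u (1 - t)

noncomputable def curveAppend (u v : ℝ → E) : ℝ → E :=
  fun t => if t ≤ 1 / 2 then u (2 * t) else v (2 * t - 1)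

@[simp] lemma curveReverse_zero (u : ℝ → E) : curveReverse u 0 = u 1 := by
  simp [curveReverse]

@[simp] lemma curveReverse_one (u : ℝ → E) : curveReverse u 1 = u 0 := by
  simp [curveReverse]

@[simp] lemma curveAppend_zero (u v : ℝ → E) : curveAppend u v 0 = u 0 := by
  simp [curveAppend]

@[simp] lemma curveAppend_one (u v : ℝ → E) : curveAppend u v 1 = v 1 := by
  norm_num [curveAppend]

lemma curveAppend_eqOn_left (u v : ℝ → E) :
    EqOn (curveAppend u v) (u ∘ fun t => 2 * t) (Icc 0 (1 / 2)) := fun t ht => by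
  simp only [curveAppend, Function.comp_apply, if_pos ht.2]

lemma curveAppend_eqOn_right {u v : ℝ → E} (h : u 1 = v 0) :
    EqOn (curveAppend u v) (v ∘ fun t => 2 * t - 1) (Icc (1 / 2) 1) := by
  rintro t ⟨ht, -⟩
  rcases ht.lt_or_eq with ht | rfl
  · simp only [curveAppend, Function.comp_apply, if_neg (not_le.2 ht)]
  · norm_num [curveAppend, h]

variable {F : Type*} [PseudoEMetricSpace F]

lemma eVariationOn_curveReverse (u : ℝ → F) :
    eVariationOn (curveReverse u) (Icc 0 1) = eVariationOn u (Icc 0 1) := by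
  have h := eVariationOn.comp_eq_of_antitoneOn u (fun t : ℝ => 1 - t) (t := Icc 0 1)
    fun a _ b _ hab => by linarith
  rwa [image_const_sub_Icc, sub_self, sub_zero] at h

lemma eVariationOn_curveAppend {u v : ℝ → F} (h : u 1 = v 0) :
    eVariationOn (curveAppend u v) (Icc 0 1)
      = eVariationOn u (Icc 0 1) + eVariationOn v (Icc 0 1) := by
  have hsplit := eVariationOn.Icc_add_Icc (curveAppend u v) (s := univ)
    (a := 0) (b := 1 / 2) (c := 1) (by norm_num) (by norm_num) (mem_univ _)
  simp only [univ_inter] at hsplit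
  rw [← hsplit, eVariationOn.eq_of_eqOn (curveAppend_eqOn_left u v),
    eVariationOn.eq_of_eqOn (curveAppend_eqOn_right h),
    eVariationOn.comp_eq_of_monotoneOn u _ fun a _ b _ hab => by linarith,
    eVariationOn.comp_eq_of_monotoneOn v _ fun a _ b _ hab => by linarith,
    image_mul_left_Icc (by norm_num) (by norm_num),
    show (fun t : ℝ => 2 * t - 1) = fun t => 2 * t + -1 by simp only [sub_eq_add_neg],
    image_affine_Icc' (by norm_num)]
  norm_num

lemma eVariationOn_comp_curveAppend (g : E → F) {u v : ℝ → E} (h : u 1 = v 0) :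
    eVariationOn (g ∘ curveAppend u v) (Icc 0 1)
      = eVariationOn (g ∘ u) (Icc 0 1) + eVariationOn (g ∘ v) (Icc 0 1) := by
  rw [show g ∘ curveAppend u v = curveAppend (g ∘ u) (g ∘ v) from
    funext fun t => apply_ite g _ _ _]
  exact eVariationOn_curveAppend (congrArg g h)

lemma LipschitzWith.comp_eVariationOn_le [PseudoEMetricSpace E] {C : ℝ≥0} {g : E → F}
    (hg : LipschitzWith C g) (u : ℝ → E) (s : Set ℝ) :
    eVariationOn (g ∘ u) s ≤ C * eVariationOn u s :=
  (hg.lipschitzOnWith (s := univ)).comp_eVariationOn_le (mapsTo_univ u s)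

end Curves

section IntrinsicDistance

variable {M : Type*} [MetricSpace M] {S : Set M} {x y z : M} {u v : ℝ → M}

lemma IsCurve.reverse (hu : IsCurve S x y u) : IsCurve S y x (curveReverse u) := by
  obtain ⟨hc, hm, h0, h1, hv⟩ := hu
  have hmaps : MapsTo (fun t : ℝ => 1 - t) (Icc 0 1) (Icc 0 1) :=
    fun t ht => ⟨by linarith [ht.2], by linarith [ht.1]⟩
  exact ⟨hc.comp (by fun_prop) hmaps, hm.comp hmaps, by simpa, by simpa,
    by rwa [eVariationOn_curveReverse]⟩

lemma IsCurve.append (hu : IsCurve S x y u) (hv : IsCurve S y z v) :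
    IsCurve S x z (curveAppend u v) := by
  obtain ⟨huc, hum, hu0, hu1, huv⟩ := hu
  obtain ⟨hvc, hvm, hv0, hv1, hvv⟩ := hv
  have hmid : u 1 = v 0 := hu1.trans hv0.symm
  have hleft : MapsTo (fun t : ℝ => 2 * t) (Icc 0 (1 / 2)) (Icc 0 1) :=
    fun t ht => ⟨by linarith [ht.1], by linarith [ht.2]⟩
  have hright : MapsTo (fun t : ℝ => 2 * t - 1) (Icc (1 / 2) 1) (Icc 0 1) :=
    fun t ht => ⟨by linarith [ht.1], by linarith [ht.2]⟩
  have hunion : Icc (0 : ℝ) 1 = Icc 0 (1 / 2) ∪ Icc (1 / 2) 1 :=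
    (Icc_union_Icc_eq_Icc (by norm_num) (by norm_num)).symm
  refine ⟨?_, ?_, by simpa, by simpa, ?_⟩
  · rw [hunion]
    exact ((huc.comp (by fun_prop) hleft).congr (curveAppend_eqOn_left u v)).union_of_isClosed
      ((hvc.comp (by fun_prop) hright).congr (curveAppend_eqOn_right hmid))
      isClosed_Icc isClosed_Icc
  · rw [hunion]
    rintro t (ht | ht)
    · rw [curveAppend_eqOn_left u v ht]; exact hum (hleft ht)
    · rw [curveAppend_eqOn_right hmid ht]; exact hvm (hright ht)
  · rw [eVariationOn_curveAppend hmid]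
    exact ENNReal.add_ne_top.2 ⟨huv, hvv⟩

lemma dS_le_eVariationOn (hu : IsCurve S x y u) : dS S x y ≤ eVariationOn u (Icc 0 1) :=
  iInf₂_le u hu

lemma exists_isCurve_eVariationOn_lt {c : ℝ≥0∞} (h : dS S x y < c) :
    ∃ u, IsCurve S x y u ∧ eVariationOn u (Icc 0 1) < c := by
  simpa [dS, iInf_lt_iff] using h

lemma dS_triangle : dS S x z ≤ dS S x y + dS S y z := by
  simp only [dS, ENNReal.iInf_add, ENNReal.add_iInf]
  refine le_iInf₂ fun v hv => le_iInf₂ fun u hu => ?_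
  rw [← eVariationOn_curveAppend (hu.2.2.2.1.trans hv.2.2.1.symm)]
  exact dS_le_eVariationOn (hu.append hv)

lemma dS_comm : dS S x y = dS S y x := by
  suffices ∀ a b : M, dS S b a ≤ dS S a b from (this y x).antisymm (this x y)
  intro a b
  refine le_iInf₂ fun u hu => ?_
  rw [← eVariationOn_curveReverse]
  exact dS_le_eVariationOn hu.reverse

lemma edist_le_dS : edist x y ≤ dS S x y := by
  refine le_iInf₂ fun u hu => ?_
  have h := eVariationOn.edist_le u (s := Icc (0 : ℝ) 1) (x := 0) (y := 1)
    ⟨le_rfl, zero_le_one⟩ ⟨zero_le_one, le_rfl⟩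
  rwa [hu.2.2.1, hu.2.2.2.1] at h

lemma dS_le_add_dS_add {x₀ y₀ : M} (hu : IsCurve S x x₀ u) (hv : IsCurve S y y₀ v) :
    dS S x y ≤ eVariationOn u (Icc 0 1) + dS S x₀ y₀ + eVariationOn v (Icc 0 1) :=
  calc dS S x y ≤ dS S x x₀ + (dS S x₀ y₀ + dS S y₀ y) :=
        dS_triangle.trans (add_le_add_right dS_triangle _)
    _ ≤ eVariationOn u (Icc 0 1) + (dS S x₀ y₀ + eVariationOn v (Icc 0 1)) := by
        gcongr
        · exact dS_le_eVariationOn hu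
        · rw [dS_comm]; exact dS_le_eVariationOn hv
    _ = eVariationOn u (Icc 0 1) + dS S x₀ y₀ + eVariationOn v (Icc 0 1) := (add_assoc ..).symm

lemma dS_ne_zero (hxy : x ≠ y) : dS S x y ≠ 0 := fun h =>
  hxy (edist_eq_zero.1 (le_zero_iff.1 (h ▸ edist_le_dS)))

lemma IsCurve.dS_ne_top (hu : IsCurve S x y u) : dS S x y ≠ ⊤ :=
  ne_top_of_le_ne_top hu.2.2.2.2 (dS_le_eVariationOn hu)

end IntrinsicDistance

section NearbyEndpoints

variable {M : Type*} [MetricSpace M] {S : Set M} {n : ℕ} {ε : ℝ}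
  {f : M → EuclideanSpace ℝ (Fin n)} {x y x₀ y₀ : M} {α β γ : ℝ → M}

lemma ofReal_one_sub_mul_dS_le_of_memF (hε₀ : 0 ≤ ε) (hε : ε ≤ 1) (hf : LipschitzWith 1 f)
    (hF : MemF n ε S x₀ y₀ f) (hα : IsCurve S x x₀ α) (hβ : IsCurve S y y₀ β)
    (hγ : IsCurve S x y γ) :
    ENNReal.ofReal (1 - ε) * dS S x y ≤
      eVariationOn (f ∘ γ) (Icc 0 1) + ENNReal.ofReal ε * eVariationOn γ (Icc 0 1)
        + 3 * (eVariationOn α (Icc 0 1) + eVariationOn β (Icc 0 1)) := by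
  set a := eVariationOn α (Icc 0 1)
  set b := eVariationOn β (Icc 0 1)
  set L := eVariationOn γ (Icc 0 1)
  set A := eVariationOn (f ∘ γ) (Icc 0 1)
  set c := ENNReal.ofReal ε
  have hc : c ≤ 1 := ENNReal.ofReal_le_one.2 hε
  have hjoin := hα.reverse.append (hγ.append hβ)
  have hmid₁ : curveReverse α 1 = curveAppend γ β 0 := by
    simp [hα.2.2.1, hγ.2.2.1]
  have hmid₂ : γ 1 = β 0 := hγ.2.2.2.1.trans hβ.2.2.1.symm
  have hlen : eVariationOn (curveAppend (curveReverse α) (curveAppend γ β)) (Icc 0 1)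
      = a + (L + b) := by
    rw [eVariationOn_curveAppend hmid₁, eVariationOn_curveReverse,
      eVariationOn_curveAppend hmid₂]
  have hflen : eVariationOn (f ∘ curveAppend (curveReverse α) (curveAppend γ β)) (Icc 0 1)
      ≤ a + (A + b) := by
    rw [eVariationOn_comp_curveAppend f hmid₁, eVariationOn_comp_curveAppend f hmid₂]
    have hfα := hf.comp_eVariationOn_le (curveReverse α) (Icc 0 1)
    have hfβ := hf.comp_eVariationOn_le β (Icc 0 1)
    rw [ENNReal.coe_one, one_mul, eVariationOn_curveReverse] at hfα
    rw [ENNReal.coe_one, one_mul] at hfβ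
    gcongr
  have htri : dS S x y ≤ (a + b) + dS S x₀ y₀ := by
    rw [add_right_comm]; exact dS_le_add_dS_add hα hβ
  calc ENNReal.ofReal (1 - ε) * dS S x y
      ≤ ENNReal.ofReal (1 - ε) * (a + b) + ENNReal.ofReal (1 - ε) * dS S x₀ y₀ := by
        rw [← mul_add]; gcongr
    _ ≤ (a + b) + (a + (A + b) + c * (a + (L + b))) := by
        gcongr
        · exact mul_le_of_le_one_left' (ENNReal.ofReal_le_one.2 (by linarith))
        · exact (hF _ hjoin).le.trans (by rw [hlen]; gcongr)
    _ = A + c * L + ((a + b) + (a + b) + c * (a + b)) := by ring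
    _ ≤ A + c * L + 3 * (a + b) := by
        gcongr
        calc (a + b) + (a + b) + c * (a + b) ≤ (a + b) + (a + b) + (a + b) := by
              gcongr; exact mul_le_of_le_one_left' hc
          _ = 3 * (a + b) := by ring

lemma ofReal_one_sub_mul_dS_le_of_dense {S₀ : Set M}
    (hdense : ∀ x ∈ S, ∀ δ : ℝ, 0 < δ → ∃ x₀ ∈ S₀, dS S x x₀ < ENNReal.ofReal δ)
    (hε₀ : 0 ≤ ε) (hε : ε ≤ 1) (hf : LipschitzWith 1 f)
    (hF : ∀ x₀ ∈ S₀, ∀ y₀ ∈ S₀, x₀ ≠ y₀ → MemF n ε S x₀ y₀ f)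
    (hx : x ∈ S) (hy : y ∈ S) (hxy : x ≠ y) (hγ : IsCurve S x y γ) :
    ENNReal.ofReal (1 - ε) * dS S x y ≤
      eVariationOn (f ∘ γ) (Icc 0 1) + ENNReal.ofReal ε * eVariationOn γ (Icc 0 1) := by
  have hD := ENNReal.toReal_pos (dS_ne_zero hxy) hγ.dS_ne_top
  refine ENNReal.le_of_forall_pos_le_add fun η hη _ => ?_
  set δ := min ((η : ℝ) / 6) ((dS S x y).toReal / 3)
  have hδ : 0 < δ := lt_min (by positivity) (by positivity)
  have hδη : δ ≤ (η : ℝ) / 6 := min_le_left _ _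
  have hδD : δ ≤ (dS S x y).toReal / 3 := min_le_right _ _
  obtain ⟨x₀, hx₀, hxx₀⟩ := hdense x hx δ hδ
  obtain ⟨y₀, hy₀, hyy₀⟩ := hdense y hy δ hδ
  have hne : x₀ ≠ y₀ := by
    rintro rfl
    have hlt : dS S x y < ENNReal.ofReal (δ + δ) :=
      calc dS S x y ≤ dS S x x₀ + dS S x₀ y := dS_triangle
        _ = dS S x x₀ + dS S y x₀ := by rw [dS_comm (x := x₀)]
        _ < ENNReal.ofReal δ + ENNReal.ofReal δ := ENNReal.add_lt_add hxx₀ hyy₀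
        _ = ENNReal.ofReal (δ + δ) := (ENNReal.ofReal_add hδ.le hδ.le).symm
    refine hlt.not_ge ?_
    rw [← ENNReal.ofReal_toReal hγ.dS_ne_top]
    exact ENNReal.ofReal_le_ofReal (by linarith)
  obtain ⟨α, hα, hαδ⟩ := exists_isCurve_eVariationOn_lt hxx₀
  obtain ⟨β, hβ, hβδ⟩ := exists_isCurve_eVariationOn_lt hyy₀
  calc ENNReal.ofReal (1 - ε) * dS S x y
      ≤ eVariationOn (f ∘ γ) (Icc 0 1) + ENNReal.ofReal ε * eVariationOn γ (Icc 0 1)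
        + 3 * (eVariationOn α (Icc 0 1) + eVariationOn β (Icc 0 1)) :=
        ofReal_one_sub_mul_dS_le_of_memF hε₀ hε hf (hF x₀ hx₀ y₀ hy₀ hne) hα hβ hγ
    _ ≤ eVariationOn (f ∘ γ) (Icc 0 1) + ENNReal.ofReal ε * eVariationOn γ (Icc 0 1)
        + ENNReal.ofReal (6 * δ) := by
        gcongr
        calc 3 * (eVariationOn α (Icc 0 1) + eVariationOn β (Icc 0 1))
            ≤ 3 * (ENNReal.ofReal δ + ENNReal.ofReal δ) := by gcongr
          _ = ENNReal.ofReal (6 * δ) := by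
            rw [← ENNReal.ofReal_add hδ.le hδ.le, ← ENNReal.ofReal_ofNat 3,
              ← ENNReal.ofReal_mul (by norm_num)]
            ring_nf
    _ ≤ eVariationOn (f ∘ γ) (Icc 0 1) + ENNReal.ofReal ε * eVariationOn γ (Icc 0 1) + η := by
        gcongr
        rw [← ENNReal.ofReal_coe_nnreal]
        exact ENNReal.ofReal_le_ofReal (by linarith)

end NearbyEndpoints

theorem stmt11_general {M : Type*} [MetricSpace M] (n : ℕ) (S S₀ : Set M)
    (hdense : ∀ x ∈ S, ∀ δ : ℝ, 0 < δ → ∃ x₀ ∈ S₀, dS S x x₀ < ENNReal.ofReal δ)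
    (ε : ℝ) (hε0 : 0 < ε) (hε1 : ε < 1/2)
    (f : M → EuclideanSpace ℝ (Fin n)) (hf : LipschitzWith 1 f)
    (hF : ∀ x₀ ∈ S₀, ∀ y₀ ∈ S₀, x₀ ≠ y₀ → MemF n ε S x₀ y₀ f) :
    ∀ x ∈ S, ∀ y ∈ S, x ≠ y → MemF n (2 * ε) S x y f := by
  intro x hx y hy hxy γ hγ
  calc ENNReal.ofReal (1 - 2 * ε) * dS S x y < ENNReal.ofReal (1 - ε) * dS S x y :=
        ENNReal.mul_lt_mul_left (dS_ne_zero hxy) hγ.dS_ne_top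
          ((ENNReal.ofReal_lt_ofReal_iff (by linarith)).2 (by linarith))
    _ ≤ eVariationOn (f ∘ γ) (Icc 0 1) + ENNReal.ofReal ε * eVariationOn γ (Icc 0 1) :=
        ofReal_one_sub_mul_dS_le_of_dense hdense hε0.le (by linarith) hf hF hx hy hxy hγ
    _ ≤ eVariationOn (f ∘ γ) (Icc 0 1) + ENNReal.ofReal (2 * ε) * eVariationOn γ (Icc 0 1) := by
        gcongr
        linarith

theorem stmt11 {M : Type*} [MetricSpace M] (n : ℕ) (S S₀ : Set M)
    (hS : IsPathConnected S) (hsub : S₀ ⊆ S) (hcount : S₀.Countable)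
    (hdense : ∀ x ∈ S, ∀ δ : ℝ, 0 < δ → ∃ x₀ ∈ S₀, dS S x x₀ < ENNReal.ofReal δ)
    (ε : ℝ) (hε0 : 0 < ε) (hε1 : ε < 1/2)
    (f : M → EuclideanSpace ℝ (Fin n)) (hf : LipschitzWith 1 f)
    (hF : ∀ x₀ ∈ S₀, ∀ y₀ ∈ S₀, x₀ ≠ y₀ → MemF n ε S x₀ y₀ f) :
    ∀ x ∈ S, ∀ y ∈ S, x ≠ y → MemF n (2 * ε) S x y f :=
  stmt11_general n S S₀ hdense ε hε0 hε1 f hf hF
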